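/- For the linear-Gaussian observation model Y = HX + E with X ~ N(μ_X, Σ_X), E ~ N(0, Σ_E) independent of X, the Kalman gain K = Σ_{X,Y} Σ_Y^{-1} admits the factorization K = Σ_X^{1/2} V Λ (Λ² + I_d)^{-1} Uᵀ Σ_E^{-1/2}, where U Λ Vᵀ is the SVD of the whitened observation matrix H̃ = Σ_E^{-1/2} H Σ_X^{1/2}. -/
import Mathlib


open Matrix

/-- For the linear-Gaussian observation model `Y = HX + E`, the Kalman gain
`K = Σ_{X,Y} Σ_Y⁻¹ = Σ_X Hᵀ (H Σ_X Hᵀ + Σ_E)⁻¹` factorizes as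
`K = Σ_X^{1/2} V Λ (Λ² + I)⁻¹ Uᵀ Σ_E^{-1/2}`, where `U Λ Vᵀ` is the SVD of the
whitened observation matrix `H̃ = Σ_E^{-1/2} H Σ_X^{1/2}`.
Here `SigX = Σ_X`, `SX = Σ_X^{1/2}`, `SigE = Σ_E`, `SE = Σ_E^{1/2}` are
symmetric positive definite, with `SX * SX = SigX` and `SE * SE = SigE`. -/
theorem stmt1 {d n : ℕ} (hdn : d ≤ n)
    (H : Matrix (Fin d) (Fin n) ℝ)
    (SigX SX : Matrix (Fin n) (Fin n) ℝ) (SigE SE : Matrix (Fin d) (Fin d) ℝ)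
    (hSigX : SigX.PosDef) (hSigE : SigE.PosDef) (hSX : SX.PosDef) (hSE : SE.PosDef)
    (hSX2 : SX * SX = SigX) (hSE2 : SE * SE = SigE)
    (U : Matrix (Fin d) (Fin d) ℝ) (V : Matrix (Fin n) (Fin d) ℝ) (l : Fin d → ℝ)
    (hU : Uᵀ * U = 1) (hUU : U * Uᵀ = 1) (hV : Vᵀ * V = 1)
    (hSVD : SE⁻¹ * H * SX = U * Matrix.diagonal l * Vᵀ) :
    SigX * Hᵀ * (H * SigX * Hᵀ + SigE)⁻¹ =
      SX * V * (Matrix.diagonal l * (Matrix.diagonal l ^ 2 + 1)⁻¹) * Uᵀ * SE⁻¹ := by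
  set L := Matrix.diagonal l with hL
  have hSEu : IsUnit SE.det := isUnit_iff_ne_zero.2 hSE.det_pos.ne'
  have hSEi : SE * SE⁻¹ = 1 := mul_nonsing_inv _ hSEu
  have hSEi' : SE⁻¹ * SE = 1 := nonsing_inv_mul _ hSEu
  have hDdef : L ^ 2 + 1 = Matrix.diagonal (fun i => l i ^ 2 + 1) := by
    simp [hL, ← Matrix.diagonal_one, Matrix.diagonal_pow, Matrix.diagonal_add, Pi.pow_apply]
  have hDu : IsUnit (L ^ 2 + 1).det := by
    rw [hDdef, Matrix.det_diagonal]
    exact isUnit_iff_ne_zero.2 (Finset.prod_ne_zero_iff.2 fun i _ => by positivity)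
  have hDi : (L ^ 2 + 1) * (L ^ 2 + 1)⁻¹ = 1 := mul_nonsing_inv _ hDu
  have hSEsym : SEᵀ = SE := by
    have := hSE.1.eq
    simpa using this
  have hSXsym : SXᵀ = SX := by
    have := hSX.1.eq
    simpa using this
  have hLsym : Lᵀ = L := Matrix.diagonal_transpose l
  have hHSX : H * SX = SE * (U * L * Vᵀ) := by
    calc H * SX = SE * (SE⁻¹ * H * SX) := by
          rw [← Matrix.mul_assoc, ← Matrix.mul_assoc, hSEi, Matrix.one_mul]
      _ = SE * (U * L * Vᵀ) := by rw [hSVD]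
  have hSXH : SX * Hᵀ = V * L * Uᵀ * SE := by
    have := congrArg Matrix.transpose hHSX
    simpa [Matrix.transpose_mul, hSEsym, hSXsym, hLsym, Matrix.mul_assoc] using this
  -- the middle matrix
  have hmid : H * SigX * Hᵀ + SigE = SE * (U * ((L ^ 2 + 1) * (Uᵀ * SE))) := by
    have h1 : H * SigX * Hᵀ = SE * (U * (L ^ 2 * (Uᵀ * SE))) := by
      calc H * SigX * Hᵀ = (H * SX) * (SX * Hᵀ) := by
            rw [← hSX2]; simp only [Matrix.mul_assoc]
        _ = SE * (U * L * Vᵀ) * (V * L * Uᵀ * SE) := by rw [hHSX, hSXH]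
        _ = SE * (U * (L * ((Vᵀ * V) * (L * (Uᵀ * SE))))) := by
            simp only [Matrix.mul_assoc]
        _ = SE * (U * (L ^ 2 * (Uᵀ * SE))) := by
            rw [hV, Matrix.one_mul, pow_two]; simp only [Matrix.mul_assoc]
    have h2 : SigE = SE * (U * (1 * (Uᵀ * SE))) := by
      rw [Matrix.one_mul, ← Matrix.mul_assoc U Uᵀ SE, hUU, Matrix.one_mul, hSE2]
    rw [h1, h2, ← Matrix.mul_add, ← Matrix.mul_add, ← Matrix.add_mul]
  -- its inverse
  have hinv : (H * SigX * Hᵀ + SigE)⁻¹ = SE⁻¹ * (U * ((L ^ 2 + 1)⁻¹ * (Uᵀ * SE⁻¹))) := by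
    apply Matrix.inv_eq_right_inv
    rw [hmid]
    calc SE * (U * ((L ^ 2 + 1) * (Uᵀ * SE))) * (SE⁻¹ * (U * ((L ^ 2 + 1)⁻¹ * (Uᵀ * SE⁻¹))))
        = SE * (U * ((L ^ 2 + 1) * (Uᵀ * ((SE * SE⁻¹) * (U * ((L ^ 2 + 1)⁻¹ * (Uᵀ * SE⁻¹))))))) := by
          simp only [Matrix.mul_assoc]
      _ = 1 := by
          rw [hSEi, Matrix.one_mul, ← Matrix.mul_assoc Uᵀ U, hU, Matrix.one_mul,
            ← Matrix.mul_assoc (L ^ 2 + 1), hDi, Matrix.one_mul,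
            ← Matrix.mul_assoc U Uᵀ, hUU, Matrix.one_mul, hSEi]
  calc SigX * Hᵀ * (H * SigX * Hᵀ + SigE)⁻¹
      = SX * (SX * Hᵀ) * (H * SigX * Hᵀ + SigE)⁻¹ := by
        rw [← hSX2, Matrix.mul_assoc SX SX Hᵀ]
    _ = SX * (V * L * Uᵀ * SE) * (SE⁻¹ * (U * ((L ^ 2 + 1)⁻¹ * (Uᵀ * SE⁻¹)))) := by
        rw [hSXH, hinv]
    _ = SX * (V * (L * ((Uᵀ * ((SE * SE⁻¹) * U)) * ((L ^ 2 + 1)⁻¹ * (Uᵀ * SE⁻¹))))) := by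
        simp only [Matrix.mul_assoc]
    _ = SX * V * (L * (L ^ 2 + 1)⁻¹) * Uᵀ * SE⁻¹ := by
        rw [hSEi, Matrix.one_mul, hU, Matrix.one_mul]
        simp only [Matrix.mul_assoc]
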